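/- Define Ψ(0) := 0 and Ψ(x) := x²/(2·log log(1/x)) for 0 < x < 1/e, and for continuous h : [0,1] → ℝ let v_Ψ(h) ∈ [0,∞] be v_Ψ(h) := lim_{δ↓0} sup{ ∑_{i=1}^n Ψ(|h(s_i) − h(s_{i−1})|) : 0 = s₀ < … < s_n = 1, max_i (s_i − s_{i−1}) ≤ δ }. If f, g : [0,1] → ℝ are continuous and v_Ψ(g) = 0, then v_Ψ(f + g) = v_Ψ(f). -/

import Mathlib

open scoped ENNReal

/-- `Ψ(x) = x²/(2 log log (1/x))`; by Lean's conventions (`1/0 = 0`, `log 0 = 0`,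
`x/0 = 0`) this gives `Ψ(0) = 0`.  It is the correct formula on `(0, 1/e)`. -/
noncomputable def PsiTaylor (x : ℝ) : ℝ :=
  x ^ 2 / (2 * Real.log (Real.log (1 / x)))

/-- The Ψ-variation `v_Ψ(h) = lim_{δ↓0} sup { ∑ Ψ(|h(sᵢ)−h(sᵢ₋₁)|) : partitions of
`[0,1]` with mesh ≤ δ }`; since the supremum is monotone in `δ`, the limit is the
infimum over `δ > 0`. -/
noncomputable def vPsi (h : ℝ → ℝ) : ℝ≥0∞ :=
  ⨅ (δ : ℝ) (_ : 0 < δ),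
    ⨆ (n : ℕ) (s : ℕ → ℝ) (_ : s 0 = 0) (_ : s n = 1)
      (_ : ∀ i < n, s i < s (i + 1)) (_ : ∀ i < n, s (i + 1) - s i ≤ δ),
      ENNReal.ofReal (∑ i ∈ Finset.range n, PsiTaylor |h (s (i + 1)) - h (s i)|)

/-!
Near `0`, `Ψ` is `x²` times a slowly varying factor, so `Ψ(c x) ≤ (1 + a) c² Ψ(x)` for small `x`.
Splitting according to whether `y ≤ a x`, this gives `Ψ(z) ≤ (1 + a)³ Ψ(x) + C_a Ψ(y)` for small
`x, y ≥ 0` and `0 ≤ z ≤ x + y`. On fine partitions all increments of `f` and `g` are small by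
uniform continuity, hence `v_Ψ(f + g) ≤ (1 + a)³ v_Ψ(f) + C_a v_Ψ(g) = (1 + a)³ v_Ψ(f)`; let
`a → 0`. The reverse inequality is the same statement for `f + g` and `-g`.
-/

open Real Set Filter Topology

lemma PsiTaylor_eq (x : ℝ) : PsiTaylor x = x ^ 2 / (2 * log (-log x)) := by
  rw [PsiTaylor, one_div, log_inv]

lemma one_lt_neg_log {x : ℝ} (hx : 0 < x) (hx1 : x < exp (-1)) : 1 < -log x := by
  have := (log_lt_iff_lt_exp hx).2 hx1
  linarith

lemma PsiTaylor_nonneg {x : ℝ} (hx0 : 0 ≤ x) (hx1 : x < exp (-1)) : 0 ≤ PsiTaylor x := by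
  rcases hx0.eq_or_lt with rfl | hx
  · simp [PsiTaylor]
  · rw [PsiTaylor_eq]
    have := log_pos (one_lt_neg_log hx hx1)
    positivity

lemma PsiTaylor_monotoneOn : MonotoneOn PsiTaylor (Ico 0 (exp (-1))) := by
  rintro x ⟨hx0, -⟩ y ⟨-, hy1⟩ hxy
  rcases hx0.eq_or_lt with rfl | hx
  · simpa [PsiTaylor] using PsiTaylor_nonneg (hx0.trans hxy) hy1
  have hy := hx.trans_le hxy
  have hLy : 0 < log (-log y) := log_pos (one_lt_neg_log hy hy1)
  have hLxy : log (-log y) ≤ log (-log x) :=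
    log_le_log (by linarith [one_lt_neg_log hy hy1]) (by linarith [log_le_log hx hxy])
  rw [PsiTaylor_eq, PsiTaylor_eq]
  exact div_le_div₀ (sq_nonneg y) (pow_le_pow_left₀ hx0 hxy 2) (by positivity) (by linarith)

lemma eventually_log_le_mul_log_sub (b : ℝ) {a : ℝ} (ha : 0 < a) :
    ∀ᶠ w in atTop, log w ≤ (1 + a) * log (w - b) := by
  have hlog : Tendsto (fun w => log (w - b)) atTop atTop :=
    tendsto_log_atTop.comp (tendsto_atTop_add_const_right _ (-b) tendsto_id)
  filter_upwards [hlog.eventually_ge_atTop (log 2 / a), eventually_ge_atTop (2 * b),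
    eventually_gt_atTop 0] with w hlarge hwb hw
  have hhalf : log (w / 2) ≤ log (w - b) := log_le_log (by positivity) (by linarith)
  have hlog2 : log 2 ≤ a * log (w - b) := by rwa [div_le_iff₀' ha] at hlarge
  calc log w = log 2 + log (w / 2) := by
        rw [← log_mul two_ne_zero (by positivity), mul_div_cancel₀ _ two_ne_zero]
    _ ≤ (1 + a) * log (w - b) := by linarith

lemma eventually_PsiTaylor_mul_le {c a : ℝ} (hc : 0 < c) (ha : 0 < a) :
    ∀ᶠ x in 𝓝[>] 0, c * x < exp (-1) ∧ PsiTaylor (c * x) ≤ (1 + a) * c ^ 2 * PsiTaylor x := by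
  have hw : Tendsto (fun x => -log x) (𝓝[>] 0) atTop :=
    tendsto_neg_atBot_atTop.comp tendsto_log_nhdsGT_zero
  filter_upwards [self_mem_nhdsWithin, hw.eventually (eventually_log_le_mul_log_sub (log c) ha),
    hw.eventually_gt_atTop (1 + log c), hw.eventually_gt_atTop 1] with x (hx : 0 < x) hlog hcx h1
  have hlogcx : -log (c * x) = -log x - log c := by rw [log_mul hc.ne' hx.ne']; ring
  refine ⟨(log_lt_iff_lt_exp (by positivity)).1 (by linarith), ?_⟩
  have hL : 0 < log (-log x - log c) := log_pos (by linarith)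
  have hL' : 0 < log (-log x) := log_pos h1
  rw [PsiTaylor_eq, PsiTaylor_eq, hlogcx]
  calc (c * x) ^ 2 / (2 * log (-log x - log c))
      = (1 + a) * c ^ 2 * x ^ 2 / (2 * ((1 + a) * log (-log x - log c))) := by
        field_simp
    _ ≤ (1 + a) * c ^ 2 * x ^ 2 / (2 * log (-log x)) :=
        div_le_div_of_nonneg_left (by positivity) (by positivity) (by linarith)
    _ = (1 + a) * c ^ 2 * (x ^ 2 / (2 * log (-log x))) := by ring

lemma exists_PsiTaylor_le_add {a : ℝ} (ha : 0 < a) :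
    ∃ ε > 0, ∀ x ∈ Icc 0 ε, ∀ y ∈ Icc 0 ε, ∀ z ∈ Icc 0 (x + y),
      PsiTaylor z ≤ (1 + a) ^ 3 * PsiTaylor x + (1 + a) * (1 + 1 / a) ^ 2 * PsiTaylor y := by
  have hscale : ∀ c > 0, ∀ᶠ x in 𝓝[≥] 0,
      c * x < exp (-1) ∧ PsiTaylor (c * x) ≤ (1 + a) * c ^ 2 * PsiTaylor x := fun c hc => by
    rw [← Ioi_insert]
    exact mem_nhdsWithin_insert.2 ⟨by simp [PsiTaylor, exp_pos], eventually_PsiTaylor_mul_le hc ha⟩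
  obtain ⟨ε, hε, hsmall⟩ := nhdsGE_basis_Icc.eventually_iff.1
    ((hscale (1 + a) (by positivity)).and (hscale (1 + 1 / a) (by positivity)))
  refine ⟨ε, hε, fun x hx y hy z ⟨hz0, hzxy⟩ => ?_⟩
  obtain ⟨⟨hx1, hxΨ⟩, -⟩ := hsmall hx
  rw [show (1 + a) * (1 + a) ^ 2 = (1 + a) ^ 3 by ring] at hxΨ
  obtain ⟨-, ⟨hy1, hyΨ⟩⟩ := hsmall hy
  have hx0 := hx.1
  have hy0 := hy.1
  have hΨx := PsiTaylor_nonneg hx0 (by nlinarith)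
  have hΨy := PsiTaylor_nonneg hy0 (by nlinarith [one_div_pos.2 ha])
  rcases le_or_gt y (a * x) with hyx | hxy
  · have hz : PsiTaylor z ≤ PsiTaylor ((1 + a) * x) :=
      PsiTaylor_monotoneOn ⟨hz0, by linarith⟩ ⟨by positivity, hx1⟩ (by nlinarith)
    have : 0 ≤ (1 + a) * (1 + 1 / a) ^ 2 * PsiTaylor y := by positivity
    linarith
  · have hxy' : x ≤ 1 / a * y := by rw [div_mul_eq_mul_div, le_div_iff₀ ha]; linarith
    have hz : PsiTaylor z ≤ PsiTaylor ((1 + 1 / a) * y) :=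
      PsiTaylor_monotoneOn ⟨hz0, by linarith⟩ ⟨by positivity, hy1⟩ (by linarith)
    have : 0 ≤ (1 + a) ^ 3 * PsiTaylor x := by positivity
    linarith

section PhiVariation

variable (φ : ℝ → ℝ)

noncomputable def meshVariation (h : ℝ → ℝ) (δ : ℝ) : ℝ≥0∞ :=
  ⨆ (n : ℕ) (s : ℕ → ℝ) (_ : s 0 = 0) (_ : s n = 1)
    (_ : ∀ i < n, s i < s (i + 1)) (_ : ∀ i < n, s (i + 1) - s i ≤ δ),
    ENNReal.ofReal (∑ i ∈ Finset.range n, φ |h (s (i + 1)) - h (s i)|)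

noncomputable def phiVariation (h : ℝ → ℝ) : ℝ≥0∞ :=
  ⨅ (δ : ℝ) (_ : 0 < δ), meshVariation φ h δ

lemma vPsi_eq_phiVariation (h : ℝ → ℝ) : vPsi h = phiVariation PsiTaylor h := rfl

variable {φ}

lemma ofReal_sum_le_meshVariation {h : ℝ → ℝ} {δ : ℝ} {n : ℕ} {s : ℕ → ℝ} (h0 : s 0 = 0)
    (h1 : s n = 1) (hs : ∀ i < n, s i < s (i + 1)) (hδ : ∀ i < n, s (i + 1) - s i ≤ δ) :
    ENNReal.ofReal (∑ i ∈ Finset.range n, φ |h (s (i + 1)) - h (s i)|) ≤ meshVariation φ h δ :=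
  le_iSup_of_le n <| le_iSup_of_le s <| le_iSup_of_le h0 <| le_iSup_of_le h1 <|
    le_iSup_of_le hs <| le_iSup_of_le hδ le_rfl

lemma meshVariation_mono (h : ℝ → ℝ) : Monotone (meshVariation φ h) := fun _ _ hδ =>
  iSup_le fun _ => iSup_le fun _ => iSup_le fun h0 => iSup_le fun h1 => iSup_le fun hs =>
    iSup_le fun hmesh => ofReal_sum_le_meshVariation h0 h1 hs fun i hi => (hmesh i hi).trans hδ

lemma tendsto_meshVariation (h : ℝ → ℝ) :
    Tendsto (meshVariation φ h) (𝓝[>] 0) (𝓝 (phiVariation φ h)) := by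
  simpa [phiVariation, sInf_image] using (meshVariation_mono h).tendsto_nhdsGT 0

lemma mem_Icc_of_partition {n : ℕ} {s : ℕ → ℝ} (h0 : s 0 = 0) (h1 : s n = 1)
    (hs : ∀ i < n, s i < s (i + 1)) {i : ℕ} (hi : i ≤ n) : s i ∈ Icc 0 1 := by
  have hmono : Monotone fun k => s (min k n) := monotone_nat_of_le_succ fun k => by
    rcases lt_or_ge k n with hk | hk
    · simpa [min_eq_left hk.le, min_eq_left (Nat.succ_le_of_lt hk)] using (hs k hk).le
    · simp [min_eq_right hk, min_eq_right (hk.trans k.le_succ)]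
  have hsi : s i = s (min i n) := by rw [min_eq_left hi]
  refine ⟨?_, ?_⟩
  · simpa [h0, ← hsi] using hmono (Nat.zero_le i)
  · simpa [h1, ← hsi] using hmono hi

lemma meshVariation_add_le {f g : ℝ → ℝ} {K₁ K₂ ε δ : ℝ} (hK₁ : 0 ≤ K₁) (hK₂ : 0 ≤ K₂)
    (hφ : ∀ x ∈ Icc 0 ε, ∀ y ∈ Icc 0 ε, ∀ z ∈ Icc 0 (x + y), φ z ≤ K₁ * φ x + K₂ * φ y)
    (hf : ∀ u ∈ Icc (0 : ℝ) 1, ∀ v ∈ Icc (0 : ℝ) 1, dist u v ≤ δ → dist (f u) (f v) ≤ ε)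
    (hg : ∀ u ∈ Icc (0 : ℝ) 1, ∀ v ∈ Icc (0 : ℝ) 1, dist u v ≤ δ → dist (g u) (g v) ≤ ε) :
    meshVariation φ (f + g) δ ≤
      ENNReal.ofReal K₁ * meshVariation φ f δ + ENNReal.ofReal K₂ * meshVariation φ g δ := by
  refine iSup_le fun n => iSup_le fun s => iSup_le fun h0 => iSup_le fun h1 =>
    iSup_le fun hs => iSup_le fun hmesh => ?_
  have hstep : ∀ i < n, φ |(f + g) (s (i + 1)) - (f + g) (s i)| ≤
      K₁ * φ |f (s (i + 1)) - f (s i)| + K₂ * φ |g (s (i + 1)) - g (s i)| := by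
    intro i hi
    have hu := mem_Icc_of_partition h0 h1 hs (Nat.succ_le_of_lt hi)
    have hv := mem_Icc_of_partition h0 h1 hs hi.le
    have hdist : dist (s (i + 1)) (s i) ≤ δ := by
      rw [Real.dist_eq, abs_of_pos (sub_pos.2 (hs i hi))]
      exact hmesh i hi
    refine hφ _ ⟨abs_nonneg _, hf _ hu _ hv hdist⟩ _ ⟨abs_nonneg _, hg _ hu _ hv hdist⟩ _
      ⟨abs_nonneg _, ?_⟩
    rw [Pi.add_apply, Pi.add_apply, add_sub_add_comm]
    exact abs_add_le _ _
  calc ENNReal.ofReal (∑ i ∈ Finset.range n, φ |(f + g) (s (i + 1)) - (f + g) (s i)|)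
      ≤ ENNReal.ofReal (K₁ * ∑ i ∈ Finset.range n, φ |f (s (i + 1)) - f (s i)| +
          K₂ * ∑ i ∈ Finset.range n, φ |g (s (i + 1)) - g (s i)|) := by
        rw [Finset.mul_sum, Finset.mul_sum, ← Finset.sum_add_distrib]
        exact ENNReal.ofReal_le_ofReal
          (Finset.sum_le_sum fun i hi => hstep i (Finset.mem_range.1 hi))
    _ ≤ ENNReal.ofReal K₁ *
          ENNReal.ofReal (∑ i ∈ Finset.range n, φ |f (s (i + 1)) - f (s i)|) +
        ENNReal.ofReal K₂ *
          ENNReal.ofReal (∑ i ∈ Finset.range n, φ |g (s (i + 1)) - g (s i)|) := by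
        rw [← ENNReal.ofReal_mul hK₁, ← ENNReal.ofReal_mul hK₂]
        exact ENNReal.ofReal_add_le
    _ ≤ _ := by
        gcongr <;> exact ofReal_sum_le_meshVariation h0 h1 hs hmesh

lemma phiVariation_add_le {f g : ℝ → ℝ} {K₁ K₂ ε : ℝ} (hK₁ : 0 ≤ K₁) (hK₂ : 0 ≤ K₂)
    (hε : 0 < ε)
    (hφ : ∀ x ∈ Icc 0 ε, ∀ y ∈ Icc 0 ε, ∀ z ∈ Icc 0 (x + y), φ z ≤ K₁ * φ x + K₂ * φ y)
    (hf : ContinuousOn f (Icc 0 1)) (hg : ContinuousOn g (Icc 0 1)) :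
    phiVariation φ (f + g) ≤
      ENNReal.ofReal K₁ * phiVariation φ f + ENNReal.ofReal K₂ * phiVariation φ g := by
  have hunif : ∀ h : ℝ → ℝ, ContinuousOn h (Icc 0 1) → ∃ δ > 0,
      ∀ u ∈ Icc (0 : ℝ) 1, ∀ v ∈ Icc (0 : ℝ) 1, dist u v ≤ δ → dist (h u) (h v) ≤ ε :=
    fun h hh => Metric.uniformContinuousOn_iff_le.1
      (isCompact_Icc.uniformContinuousOn_of_continuous hh) ε hε
  obtain ⟨δf, hδf, hf'⟩ := hunif f hf
  obtain ⟨δg, hδg, hg'⟩ := hunif g hg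
  refine le_of_tendsto_of_tendsto (tendsto_meshVariation _)
    ((ENNReal.Tendsto.const_mul (tendsto_meshVariation f) (Or.inr ENNReal.ofReal_ne_top)).add
      (ENNReal.Tendsto.const_mul (tendsto_meshVariation g) (Or.inr ENNReal.ofReal_ne_top))) ?_
  filter_upwards [Ioo_mem_nhdsGT (lt_min hδf hδg)] with δ hδ
  exact meshVariation_add_le hK₁ hK₂ hφ
    (fun u hu v hv huv => hf' u hu v hv (huv.trans (hδ.2.le.trans (min_le_left _ _))))
    (fun u hu v hv huv => hg' u hu v hv (huv.trans (hδ.2.le.trans (min_le_right _ _))))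

lemma phiVariation_neg (h : ℝ → ℝ) : phiVariation φ (-h) = phiVariation φ h := by
  simp only [phiVariation, meshVariation, Pi.neg_apply, neg_sub_neg, abs_sub_comm]

end PhiVariation

lemma vPsi_add_le_of_vPsi_zero {f g : ℝ → ℝ} (hf : ContinuousOn f (Icc 0 1))
    (hg : ContinuousOn g (Icc 0 1)) (hg0 : vPsi g = 0) : vPsi (f + g) ≤ vPsi f := by
  have hbound : ∀ a > 0, vPsi (f + g) ≤ ENNReal.ofReal ((1 + a) ^ 3) * vPsi f := fun a ha => by
    obtain ⟨ε, hε, hΨ⟩ := exists_PsiTaylor_le_add ha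
    simpa [← vPsi_eq_phiVariation, hg0] using
      phiVariation_add_le (by positivity) (by positivity) hε hΨ hf hg
  have hfactor : Continuous fun a : ℝ => ENNReal.ofReal ((1 + a) ^ 3) :=
    ENNReal.continuous_ofReal.comp (by fun_prop)
  have hlim : Tendsto (fun a : ℝ => ENNReal.ofReal ((1 + a) ^ 3) * vPsi f) (𝓝[>] 0)
      (𝓝 (vPsi f)) := by
    simpa using ENNReal.Tendsto.mul_const ((hfactor.tendsto 0).mono_left nhdsWithin_le_nhds)
      (Or.inl (by simp))
  exact ge_of_tendsto hlim (eventually_nhdsWithin_of_forall hbound)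

/-- Lemma 3.13 (c) of the paper: adding a function of vanishing Ψ-variation does not
change the Ψ-variation. -/
theorem vPsi_add_of_vPsi_zero (f g : ℝ → ℝ)
    (hf : ContinuousOn f (Set.Icc (0 : ℝ) 1))
    (hg : ContinuousOn g (Set.Icc (0 : ℝ) 1))
    (hg0 : vPsi g = 0) :
    vPsi (fun t => f t + g t) = vPsi f := by
  have hg0' : vPsi (-g) = 0 := by rw [vPsi_eq_phiVariation, phiVariation_neg]; exact hg0
  have hle := vPsi_add_le_of_vPsi_zero (hf.add hg) hg.neg hg0'
  rw [add_neg_cancel_right] at hle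
  exact le_antisymm (vPsi_add_le_of_vPsi_zero hf hg hg0) hle
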